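/- There exists a constant C > 0, depending only on a, M, the coefficients g_k and the angles θ_k, such that |W(r,θ)| ≤ C·r for all r > 0 and all θ ∈ ℝ. In particular the induced planar velocity field is bounded near the origin and has locally finite kinetic energy. -/

import Mathlib

/-!
Since `A = -i·z` with `z = 2a/(a+i)`, the three exponentials in the `k`-th summand combine into
`exp (z (ln r - i x))` with `x = 2πJ + θ_k - θ`, whose modulus is `exp (2a (a ln r - x)/(a²+1))`.
The winding condition `a x + ln r > 0` bounds this exponent by `2 ln r`, so the summand is
`O(r² / r) = O(r)`, uniformly in `θ`.
-/

/-- The complex constant `A := −2ai/(a+i)`. -/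
noncomputable def Aconst (a : ℝ) : ℂ := -2 * (a : ℂ) * Complex.I / ((a : ℂ) + Complex.I)

/-- The self-similar velocity profile
`W(r,θ) := e^{iθ} Σ_{k} (2a g_k/(r(a−i))) · conj( exp((2a/(a+i)) ln r) · e^{A(θ_k−θ)} ·
e^{2πJ(r,θ,k)A}/(1−e^{2πA}) )`, where `J` is the winding-number function. -/
noncomputable def Wprof (a : ℝ) (M : ℕ) (g θs : Fin M → ℝ)
    (J : ℝ → ℝ → Fin M → ℤ) (r θ : ℝ) : ℂ :=
  Complex.exp (Complex.I * (θ : ℂ)) * ∑ k : Fin M,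
    (2 * (a : ℂ) * (g k : ℂ) / ((r : ℂ) * ((a : ℂ) - Complex.I))) *
      (starRingEnd ℂ)
        (Complex.exp ((2 * (a : ℂ) / ((a : ℂ) + Complex.I)) * (Real.log r : ℂ)) *
          Complex.exp (Aconst a * ((θs k : ℂ) - (θ : ℂ))) *
          (Complex.exp (2 * (Real.pi : ℂ) * (J r θ k : ℂ) * Aconst a) /
            (1 - Complex.exp (2 * (Real.pi : ℂ) * Aconst a))))

open Complex
open scoped Real

theorem Aconst_eq_neg_I_mul (a : ℝ) : Aconst a = -I * (2 * a / (a + I)) := by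
  unfold Aconst; ring

theorem re_two_mul_div_add_I_mul (a L x : ℝ) :
    (2 * a / (a + I) * (L - I * x)).re = 2 * a * (a * L - x) / (a ^ 2 + 1) := by
  simp only [mul_re, div_re, re_ofNat, ofReal_re, im_ofNat, ofReal_im, mul_zero, sub_zero, add_re,
    I_re, add_zero, normSq_apply, add_im, I_im, zero_add, mul_one, mul_im, zero_mul, zero_div,
    sub_re, sub_self, div_im, zero_sub, sub_im, one_mul, mul_neg, neg_mul, neg_neg]
  field_simp

theorem exp_mul_exp_Aconst_mul_exp_Aconst (a L θk θ : ℝ) (j : ℤ) :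
    exp (2 * a / (a + I) * L) * exp (Aconst a * (θk - θ)) * exp (2 * π * j * Aconst a) =
      exp (2 * a / (a + I) * (L - I * ((2 * π * j + θk - θ : ℝ)))) := by
  rw [← exp_add, ← exp_add, Aconst_eq_neg_I_mul]
  push_cast
  ring_nf

theorem norm_exp_two_pi_mul_Aconst_lt_one {a : ℝ} (ha : 0 < a) :
    ‖exp (2 * π * Aconst a)‖ < 1 := by
  have h : 2 * π * Aconst a = 2 * a / (a + I) * ((0 : ℝ) - I * (2 * π : ℝ)) := by
    rw [Aconst_eq_neg_I_mul]; push_cast; ring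
  rw [norm_exp, h, re_two_mul_div_add_I_mul, Real.exp_lt_one_iff]
  exact div_neg_of_neg_of_pos (by nlinarith [Real.pi_pos]) (by positivity)

theorem one_sub_exp_two_pi_mul_Aconst_ne_zero {a : ℝ} (ha : 0 < a) :
    1 - exp (2 * π * Aconst a) ≠ 0 :=
  fun h => (norm_exp_two_pi_mul_Aconst_lt_one ha).ne (by rw [← sub_eq_zero.mp h, norm_one])

theorem norm_exp_two_mul_div_add_I_mul_le_sq {a r x : ℝ} (ha : 0 < a) (hr : 0 < r)
    (hx : 0 < a * x + Real.log r) :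
    ‖exp (2 * a / (a + I) * (Real.log r - I * x))‖ ≤ r ^ 2 := by
  rw [norm_exp, re_two_mul_div_add_I_mul, ← Real.exp_log (pow_pos hr 2), Real.log_pow,
    Real.exp_le_exp, div_le_iff₀ (by positivity)]
  push_cast
  nlinarith [mul_pos ha hx]

theorem norm_Wprof_summand_le {a r θk θ : ℝ} (g : ℝ) (j : ℤ) (ha : 0 < a) (hr : 0 < r)
    (hj : 0 < a * (2 * π * j + θk - θ) + Real.log r) :
    ‖(2 * (a : ℂ) * (g : ℂ) / ((r : ℂ) * ((a : ℂ) - I))) *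
      (starRingEnd ℂ) (exp ((2 * (a : ℂ) / ((a : ℂ) + I)) * (Real.log r : ℂ)) *
        exp (Aconst a * ((θk : ℂ) - (θ : ℂ))) *
        (exp (2 * (π : ℂ) * (j : ℂ) * Aconst a) / (1 - exp (2 * (π : ℂ) * Aconst a))))‖ ≤
      2 * a * |g| / (‖(a : ℂ) - I‖ * ‖1 - exp (2 * π * Aconst a)‖) * r := by
  have hs : 0 < ‖(a : ℂ) - I‖ := norm_pos_iff.mpr fun h => by simpa using congrArg im h
  have hD : 0 < ‖1 - exp (2 * π * Aconst a)‖ :=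
    norm_pos_iff.mpr (one_sub_exp_two_pi_mul_Aconst_ne_zero ha)
  rw [← mul_div_assoc, exp_mul_exp_Aconst_mul_exp_Aconst]
  calc _ = 2 * a * |g| / (r * ‖(a : ℂ) - I‖) *
        (‖exp (2 * a / (a + I) * (Real.log r - I * ((2 * π * j + θk - θ : ℝ))))‖ /
          ‖1 - exp (2 * π * Aconst a)‖) := by
        rw [norm_mul, Complex.norm_conj, norm_div, norm_div]
        simp [abs_of_pos ha, abs_of_pos hr]
    _ ≤ 2 * a * |g| / (r * ‖(a : ℂ) - I‖) * (r ^ 2 / ‖1 - exp (2 * π * Aconst a)‖) := by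
        gcongr
        exact norm_exp_two_mul_div_add_I_mul_le_sq ha hr hj
    _ = _ := by field_simp

theorem Wprof_linear_growth (a : ℝ) (ha : 0 < a) (M : ℕ)
    (g θs : Fin M → ℝ) (J : ℝ → ℝ → Fin M → ℤ)
    (hJ : ∀ (r θ : ℝ) (k : Fin M), 0 < r →
      IsLeast {j : ℤ | 0 < a * (2 * Real.pi * (j : ℝ) + θs k - θ) + Real.log r} (J r θ k)) :
    ∃ C : ℝ, 0 < C ∧ ∀ (r θ : ℝ), 0 < r →
      ‖Wprof a M g θs J r θ‖ ≤ C * r := by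
  set c : Fin M → ℝ := fun k => 2 * a * |g k| / (‖(a : ℂ) - I‖ * ‖1 - exp (2 * π * Aconst a)‖)
  refine ⟨∑ k, c k + 1, by positivity, fun r θ hr => ?_⟩
  rw [Wprof, norm_mul, norm_exp_I_mul_ofReal, one_mul]
  calc _ ≤ ∑ k, c k * r := (norm_sum_le _ _).trans <| Finset.sum_le_sum fun k _ =>
          norm_Wprof_summand_le (g k) (J r θ k) ha hr (hJ r θ k hr).1
    _ ≤ (∑ k, c k + 1) * r := by rw [← Finset.sum_mul]; linarith
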